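/- Let n ≥ 2 be an integer, M a real symmetric n×n matrix, β > 0, and α ∈ ℝ. Then the weighted (n−1)-dimensional Hausdorff-measure integrals over level sets satisfy ∫_{{ξ ≠ 0 : H_{βM}(ξ) = 1}} |ξ|^{1+2α} dμH^{n−1}(ξ) = β^{n+2α} · ∫_{{ξ ≠ 0 : H_M(ξ) = 1}} |ξ|^{1+2α} dμH^{n−1}(ξ). -/
import Mathlib

open MeasureTheory Pointwise NNReal ENNReal

/-- The Euclidean quadratic form `⟨Mξ, ξ⟩` of a matrix `M`. -/
noncomputable def quadFormHM {n : ℕ} (M : Matrix (Fin n) (Fin n) ℝ)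
    (ξ : EuclideanSpace ℝ (Fin n)) : ℝ :=
  inner (𝕜 := ℝ) (Matrix.toEuclideanLin M ξ) ξ

/-- `H_M(ξ) = ⟨Mξ,ξ⟩² / |ξ|⁶`, the squared principal symbol of the Neumann–Poincaré
operator in matrix form. -/
noncomputable def HM {n : ℕ} (M : Matrix (Fin n) (Fin n) ℝ)
    (ξ : EuclideanSpace ℝ (Fin n)) : ℝ :=
  (quadFormHM M ξ) ^ 2 / ‖ξ‖ ^ 6

lemma quadFormHM_smul_matrix {n : ℕ} (M : Matrix (Fin n) (Fin n) ℝ) (β : ℝ)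
    (ξ : EuclideanSpace ℝ (Fin n)) :
    quadFormHM (β • M) ξ = β * quadFormHM M ξ := by
  simp only [quadFormHM, _root_.map_smul, LinearMap.smul_apply, real_inner_smul_left]

lemma quadFormHM_smul_vec {n : ℕ} (M : Matrix (Fin n) (Fin n) ℝ) (c : ℝ)
    (ξ : EuclideanSpace ℝ (Fin n)) :
    quadFormHM M (c • ξ) = c ^ 2 * quadFormHM M ξ := by
  simp only [quadFormHM, _root_.map_smul, real_inner_smul_left, real_inner_smul_right]
  ring

lemma HM_smul_matrix {n : ℕ} (M : Matrix (Fin n) (Fin n) ℝ) (β : ℝ)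
    (ξ : EuclideanSpace ℝ (Fin n)) :
    HM (β • M) ξ = β ^ 2 * HM M ξ := by
  simp [HM, quadFormHM_smul_matrix, mul_pow, mul_div_assoc]

lemma HM_smul_vec {n : ℕ} (M : Matrix (Fin n) (Fin n) ℝ) {c : ℝ} (hc : c ≠ 0)
    (ξ : EuclideanSpace ℝ (Fin n)) :
    HM M (c • ξ) = HM M ξ / c ^ 2 := by
  rcases eq_or_ne ξ 0 with rfl | hξ
  · simp [HM, quadFormHM]
  · have hnorm : ‖c • ξ‖ = |c| * ‖ξ‖ := by
      rw [norm_smul, Real.norm_eq_abs]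
    have habs : (|c| * ‖ξ‖) ^ 6 = c ^ 6 * ‖ξ‖ ^ 6 := by
      rw [mul_pow, ← abs_pow, abs_of_nonneg (by positivity : (0:ℝ) ≤ c ^ 6)]
    have hξn : (0:ℝ) < ‖ξ‖ := norm_pos_iff.mpr hξ
    rw [HM, HM, quadFormHM_smul_vec, hnorm, habs]
    field_simp

/-- Scaling of the weighted Hausdorff-measure integral `∫_{H_M = 1} |ξ|^{1+2α} dμH^{n-1}`
under scaling of the matrix: replacing `M` by `βM` multiplies it by `β^{n+2α}`. -/
theorem weighted_levelSet_integral_smul_matrix {n : ℕ} (hn : 2 ≤ n)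
    (M : Matrix (Fin n) (Fin n) ℝ) (hM : M.IsSymm) (β : ℝ) (hβ : 0 < β) (α : ℝ) :
    ∫ ξ in {ξ : EuclideanSpace ℝ (Fin n) | ξ ≠ 0 ∧ HM (β • M) ξ = 1},
        ‖ξ‖ ^ (1 + 2 * α) ∂(μH[(n:ℝ) - 1])
      = β ^ ((n:ℝ) + 2 * α) *
        ∫ ξ in {ξ : EuclideanSpace ℝ (Fin n) | ξ ≠ 0 ∧ HM M ξ = 1},
          ‖ξ‖ ^ (1 + 2 * α) ∂(μH[(n:ℝ) - 1]) := by
  classical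
  set d : ℝ := (n:ℝ) - 1 with hd_def
  have hn1 : (2:ℝ) ≤ (n:ℝ) := by exact_mod_cast hn
  have hd : 0 ≤ d := by simp only [hd_def]; linarith
  have hβ0 : β ≠ 0 := hβ.ne'
  set S : Set (EuclideanSpace ℝ (Fin n)) := {ξ : EuclideanSpace ℝ (Fin n) | ξ ≠ 0 ∧ HM M ξ = 1}
    with hS_def
  -- Level set for β • M equals β • S
  have hset : {ξ : EuclideanSpace ℝ (Fin n) | ξ ≠ 0 ∧ HM (β • M) ξ = 1} = β • S := by
    ext ξ
    rw [Set.mem_smul_set_iff_inv_smul_mem₀ hβ0]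
    simp only [hS_def, Set.mem_setOf_eq]
    constructor
    · rintro ⟨hξ, h1⟩
      refine ⟨by simp [smul_ne_zero_iff, inv_ne_zero hβ0, hξ], ?_⟩
      rw [HM_smul_vec M (inv_ne_zero hβ0)]
      rw [HM_smul_matrix] at h1
      field_simp
      nlinarith [h1]
    · rintro ⟨hξ, h1⟩
      have hξ0 : ξ ≠ 0 := by
        intro h; apply hξ; simp [h]
      refine ⟨hξ0, ?_⟩
      rw [HM_smul_vec M (inv_ne_zero hβ0)] at h1
      rw [HM_smul_matrix]
      have hval : HM M ξ = (β⁻¹) ^ 2 := by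
        field_simp at h1 ⊢
        linarith
      rw [hval]
      field_simp
  rw [hset]
  -- The scaling map as a homeomorphism
  set g : EuclideanSpace ℝ (Fin n) ≃ₜ EuclideanSpace ℝ (Fin n) :=
    Homeomorph.smulOfNeZero β hβ0 with hg_def
  have hgembed : MeasurableEmbedding (g : EuclideanSpace ℝ (Fin n) → EuclideanSpace ℝ (Fin n)) :=
    g.measurableEmbedding
  have key : (‖β‖₊ ^ d : ℝ≥0) * (‖β⁻¹‖₊ ^ d) = 1 := by
    rw [nnnorm_inv, ← NNReal.mul_rpow, mul_inv_cancel₀ (by simpa using hβ0), NNReal.one_rpow]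
  -- μH[d] = ‖β‖₊^d • map g μH[d]
  have hmap : (μH[d] : Measure (EuclideanSpace ℝ (Fin n)))
      = ((‖β‖₊ ^ d : ℝ≥0) : ℝ≥0∞) • Measure.map g μH[d] := by
    refine Measure.ext fun s hs => ?_
    rw [Measure.smul_apply, hgembed.map_apply]
    have hpre : (g : EuclideanSpace ℝ (Fin n) → EuclideanSpace ℝ (Fin n)) ⁻¹' s = β⁻¹ • s := by
      ext x
      rw [Set.mem_smul_set_iff_inv_smul_mem₀ (inv_ne_zero hβ0), inv_inv]
      simp [hg_def]
    rw [hpre, Measure.hausdorffMeasure_smul₀ hd (inv_ne_zero hβ0) s, ENNReal.smul_def, smul_eq_mul,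
      smul_eq_mul, ← mul_assoc, ← ENNReal.coe_mul, key, ENNReal.coe_one, one_mul]
  have hcoe : ((‖β‖₊ ^ d : ℝ≥0) : ℝ) = β ^ d := by
    rw [NNReal.coe_rpow, coe_nnnorm, Real.norm_eq_abs, abs_of_pos hβ]
  calc ∫ ξ in β • S, ‖ξ‖ ^ (1 + 2 * α) ∂(μH[d])
      = ∫ ξ in β • S, ‖ξ‖ ^ (1 + 2 * α)
          ∂(((‖β‖₊ ^ d : ℝ≥0) : ℝ≥0∞) • Measure.map g μH[d]) := by rw [← hmap]
    _ = (β ^ d) * ∫ ξ in β • S, ‖ξ‖ ^ (1 + 2 * α) ∂(Measure.map g μH[d]) := by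
        rw [Measure.restrict_smul, integral_smul_measure, ENNReal.coe_toReal, hcoe,
          smul_eq_mul]
    _ = (β ^ d) * ∫ x in (g : EuclideanSpace ℝ (Fin n) → EuclideanSpace ℝ (Fin n)) ⁻¹' (β • S),
          ‖g x‖ ^ (1 + 2 * α) ∂(μH[d]) := by
        rw [hgembed.setIntegral_map]
    _ = (β ^ d) * ∫ x in S, (β ^ (1 + 2 * α)) * ‖x‖ ^ (1 + 2 * α) ∂(μH[d]) := by
        have hpre : (g : EuclideanSpace ℝ (Fin n) → EuclideanSpace ℝ (Fin n)) ⁻¹' (β • S)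
            = S := by
          ext x
          simp only [Set.mem_preimage, hg_def, Homeomorph.smulOfNeZero_apply]
          exact Set.smul_mem_smul_set_iff₀ hβ0 S x
        have hfun : ∀ x : EuclideanSpace ℝ (Fin n),
            ‖g x‖ ^ (1 + 2 * α) = β ^ (1 + 2 * α) * ‖x‖ ^ (1 + 2 * α) := by
          intro x
          rw [show (g x : EuclideanSpace ℝ (Fin n)) = β • x from rfl, norm_smul,
            Real.norm_eq_abs, abs_of_pos hβ, Real.mul_rpow hβ.le (norm_nonneg x)]
        rw [hpre]
        simp_rw [hfun]
    _ = β ^ ((n:ℝ) + 2 * α) * ∫ ξ in S, ‖ξ‖ ^ (1 + 2 * α) ∂(μH[d]) := by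
        rw [integral_const_mul, ← mul_assoc, ← Real.rpow_add hβ]
        congr 2
        simp only [hd_def]; ring
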